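/- arXiv:2602.22504 — 2 statements merged into one kernel-verified Lean document; each statement's English description precedes it below -/
import Mathlib

section
/- Let d_1, d_2 be even numbers, d = d_1+d_2, and let λ_1, λ_2 be special orthogonal partitions of d_1 and d_2 respectively. Let W = W(λ_1,λ_2) = λ_1+λ_2+ξ be the Waldspurger sequence for the type D data. Then: (i) W is an orthogonal partition of d; (ii) if ν_1 is a D-collapse of λ_1^t, ν_2 is a D-collapse of λ_2^t, and ν is a D-collapse of W^t, then ν_1 ∪ ν_2 ≤ ν in dominance order; (iii) if moreover η is a D-collapse of (ν_1 ∪ ν_2)^t, then W ≤ η in dominance order. -/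
/-!
Write `s = λ₁ + λ₂` and index parts from `0`. Since `λᵢᵗ` is symplectic, the parts `λᵢ(2k)` and
`λᵢ(2k+1)` have the same parity, and since `λᵢ` is orthogonal they are equal when even. With
this, the partial sums of `ξ` have a closed form: `∑_{j ≤ N} ξ_j` is `1` if `λ₁(N)`, `λ₂(N)`
are odd and `s` does not drop after `N` for odd `N`, and `0` otherwise. Hence `∑ ξ = 0`, so
`W` is a partition of `d`, and counting the zeros of `ξ` on each block of constant even `s`
shows that `W` is orthogonal.

Transposition reverses dominance between partitions of the same size, so `λᵢ ≤ ρᵢ := νᵢᵗ`.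
Prefix sums of `λ₁` of even length are even, and, `ν₁` being orthogonal, prefix sums of `ρ₁`
of odd length are even. This parity mismatch makes `∑_{j<N} λ₁ < ∑_{j<N} ρ₁` strict whenever
the partial sum of `ξ` up to `N` is `1`, which gives `W ≤ ρ₁ + ρ₂ = (ν₁ ∪ ν₂)ᵗ`, and
transposing, `ν₁ ∪ ν₂ ≤ Wᵗ`. Both claims then follow from the maximality of the collapses,
as `W` and `ν₁ ∪ ν₂` are orthogonal partitions of `d`.
-/

/-- `f` is a partition of `d`: weakly decreasing, finitely many nonzero terms, total sum `d`.
    Indexing is 0-based: `f j` is the `(j+1)`-st part. -/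
def IsPartitionOf (f : ℕ → ℕ) (d : ℕ) : Prop :=
  Antitone f ∧ ∃ N, (∀ j, N ≤ j → f j = 0) ∧ ∑ j ∈ Finset.range N, f j = d

/-- Transpose of a partition (0-based): `ptrans f k` = #{j : f j ≥ k+1}, i.e. `(f^t)_{k+1}`. -/
noncomputable def ptrans (f : ℕ → ℕ) : ℕ → ℕ := fun k => Nat.card {j : ℕ // k + 1 ≤ f j}

/-- Multiplicity of the part `k` in `f` (meaningful for `k > 0`). -/
noncomputable def pmult (f : ℕ → ℕ) (k : ℕ) : ℕ := Nat.card {j : ℕ // f j = k}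

/-- Orthogonal: every even positive part occurs with even multiplicity. -/
def IsOrthogonal (f : ℕ → ℕ) : Prop := ∀ k, 0 < k → Even k → Even (pmult f k)

/-- Symplectic: every odd positive part occurs with even multiplicity. -/
def IsSymplectic (f : ℕ → ℕ) : Prop := ∀ k, 0 < k → Odd k → Even (pmult f k)

/-- Dominance order for ℕ-valued sequences. -/
def NDomLE (f g : ℕ → ℕ) : Prop :=
  ∀ N, ∑ j ∈ Finset.range N, f j ≤ ∑ j ∈ Finset.range N, g j

/-- Dominance order for ℤ-valued sequences. -/
def DomLE (f g : ℕ → ℤ) : Prop :=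
  ∀ N, ∑ j ∈ Finset.range N, f j ≤ ∑ j ∈ Finset.range N, g j

/-- `ν` is the `P`-collapse of `μ` (both of total size `m`): `ν` is a partition of `m`
    satisfying `P`, `ν ≤ μ`, and every partition `σ` of `m` satisfying `P` with `σ ≤ μ`
    satisfies `σ ≤ ν`. -/
def IsCollapse (P : (ℕ → ℕ) → Prop) (m : ℕ) (μ ν : ℕ → ℕ) : Prop :=
  IsPartitionOf ν m ∧ P ν ∧ NDomLE ν μ ∧
    ∀ σ, IsPartitionOf σ m → P σ → NDomLE σ μ → NDomLE σ ν

/-- B-collapse (largest orthogonal partition below `μ`, `m` odd). -/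
def IsBCollapse : ℕ → (ℕ → ℕ) → (ℕ → ℕ) → Prop := IsCollapse IsOrthogonal
/-- C-collapse (largest symplectic partition below `μ`, `m` even). -/
def IsCCollapse : ℕ → (ℕ → ℕ) → (ℕ → ℕ) → Prop := IsCollapse IsSymplectic
/-- D-collapse (largest orthogonal partition below `μ`, `m` even). -/
def IsDCollapse : ℕ → (ℕ → ℕ) → (ℕ → ℕ) → Prop := IsCollapse IsOrthogonal

/-- `μ^−` : decrease the smallest nonzero part by 1. -/
def minusOne (f : ℕ → ℕ) : ℕ → ℕ :=
  fun j => if 0 < f j ∧ f (j+1) = 0 then f j - 1 else f j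

/-- `μ^+` : increase the largest part by 1. -/
def plusOne (f : ℕ → ℕ) : ℕ → ℕ := fun j => if j = 0 then f 0 + 1 else f j

/-- `u = f ∪ g` : `u` is weakly decreasing, finitely supported, and every positive
    part occurs in `u` with multiplicity the sum of its multiplicities in `f` and `g`. -/
def IsUnionOf (u f g : ℕ → ℕ) : Prop :=
  Antitone u ∧ (∃ N, ∀ j, N ≤ j → u j = 0) ∧
    ∀ k, 0 < k → pmult u k = pmult f k + pmult g k

/-- The sequence ξ attached to `(f, g, ε₁, ε₂, d)`.  Index `j` here corresponds to the
    1-based index `j+1` of the paper. -/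
def xiSeq (f g : ℕ → ℕ) (e1 e2 d : ℕ) : ℕ → ℤ := fun j =>
  if (j + 1) % 2 = (d + 1) % 2 ∧ f j % 2 = e1 ∧ g j % 2 = e2 ∧
      (j = 0 ∨ f j + g j < f (j - 1) + g (j - 1)) then 1
  else if (j + 1) % 2 = d % 2 ∧ f j % 2 = e1 ∧ g j % 2 = e2 ∧
      f (j + 1) + g (j + 1) < f j + g j then -1
  else 0

/-- The Waldspurger sequence `W(f,g) = f + g + ξ` (ℤ-valued a priori). -/
def wald (f g : ℕ → ℕ) (e1 e2 d : ℕ) : ℕ → ℤ :=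
  fun j => (f j : ℤ) + (g j : ℤ) + xiSeq f g e1 e2 d j

open Finset

section Transpose

variable {f : ℕ → ℕ} {B : ℕ}

theorem sum_range_eq_of_le (hB : ∀ j, B ≤ j → f j = 0) {M : ℕ} (hM : B ≤ M) :
    ∑ j ∈ range M, f j = ∑ j ∈ range B, f j :=
  (sum_subset (range_subset_range.mpr hM) fun j hjM hjB => hB j (by simpa using hjB)).symm

theorem natCard_subtype_eq_card_filter {p : ℕ → Prop} [DecidablePred p]
    (hp : ∀ j, p j → j < B) : Nat.card {j // p j} = #{j ∈ range B | p j} := by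
  rw [← Nat.card_eq_finsetCard]
  exact Nat.card_congr (Equiv.subtypeEquivRight fun j => by simpa using fun h => hp j h)

theorem ptrans_eq_card (hB : ∀ j, B ≤ j → f j = 0) (m : ℕ) :
    ptrans f m = #{j ∈ range B | m < f j} :=
  natCard_subtype_eq_card_filter fun j hj => by by_contra h; have := hB j (by omega); omega

theorem pmult_eq_card (hB : ∀ j, B ≤ j → f j = 0) {c : ℕ} (hc : 0 < c) :
    pmult f c = #{j ∈ range B | f j = c} :=
  natCard_subtype_eq_card_filter fun j hj => by by_contra h; have := hB j (by omega); omega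

theorem ptrans_le (hB : ∀ j, B ≤ j → f j = 0) (m : ℕ) : ptrans f m ≤ B :=
  (ptrans_eq_card hB m).trans_le ((card_filter_le _ _).trans (card_range B).le)

theorem lt_ptrans_iff (hf : Antitone f) (hB : ∀ j, B ≤ j → f j = 0) {m j : ℕ} :
    j < ptrans f m ↔ m < f j := by
  rw [ptrans_eq_card hB]
  constructor
  · intro hj
    by_contra! hfj
    have : #{i ∈ range B | m < f i} ≤ #(range j) :=
      card_le_card fun i hi => by
        simp only [mem_filter, mem_range] at hi ⊢
        by_contra! hji
        have := hf hji
        omega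
    simp at this
    omega
  · intro hfj
    have : #(range (j + 1)) ≤ #{i ∈ range B | m < f i} :=
      card_le_card fun i hi => by
        simp only [mem_filter, mem_range] at hi ⊢
        have := hf (Nat.lt_succ_iff.mp hi)
        refine ⟨?_, by omega⟩
        by_contra! hBi
        have := hB i hBi
        omega
    simp at this
    omega

theorem antitone_ptrans (hf : Antitone f) (hB : ∀ j, B ≤ j → f j = 0) : Antitone (ptrans f) := by
  intro m m' hmm'
  by_contra! h
  have hm' := (lt_ptrans_iff hf hB).mp (Nat.sub_one_lt_of_lt h)
  have hm := (lt_ptrans_iff hf hB (m := m) (j := ptrans f m' - 1)).mpr (by omega)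
  omega

theorem ptrans_eq_zero (hf : Antitone f) (hB : ∀ j, B ≤ j → f j = 0) {m : ℕ} (hm : f 0 ≤ m) :
    ptrans f m = 0 := by
  by_contra h
  have := (lt_ptrans_iff hf hB).mp (Nat.pos_of_ne_zero h)
  omega

theorem ptrans_ptrans (hf : Antitone f) (hB : ∀ j, B ≤ j → f j = 0) : ptrans (ptrans f) = f := by
  have hB' : ∀ k, f 0 ≤ k → ptrans f k = 0 := fun k => ptrans_eq_zero hf hB
  funext k
  refine eq_of_forall_lt_iff fun j => ?_
  rw [lt_ptrans_iff (antitone_ptrans hf hB) hB', lt_ptrans_iff hf hB]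

theorem pmult_succ (hB : ∀ j, B ≤ j → f j = 0) (c : ℕ) :
    pmult f (c + 1) = ptrans f c - ptrans f (c + 1) := by
  rw [pmult_eq_card hB c.succ_pos, ptrans_eq_card hB, ptrans_eq_card hB,
    ← card_sdiff_of_subset (monotone_filter_right _ fun j h => by omega)]
  congr 1
  ext j
  simp only [mem_filter, mem_sdiff, mem_range]
  omega

theorem sum_range_ptrans (hB : ∀ j, B ≤ j → f j = 0) (K : ℕ) :
    ∑ k ∈ range K, ptrans f k = ∑ j ∈ range B, min (f j) K := by
  simp only [ptrans_eq_card hB, card_filter]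
  rw [sum_comm]
  refine sum_congr rfl fun j _ => ?_
  rw [← card_filter, ← card_range (min (f j) K)]
  congr 1
  ext k
  simp only [mem_filter, mem_range]
  omega

theorem ptrans_eq_sum_pmult (hB : ∀ j, B ≤ j → f j = 0) {T : ℕ} (hT : ∀ j, f j ≤ T) (k : ℕ) :
    ptrans f k = ∑ c ∈ Ioc k T, pmult f c := by
  rw [ptrans_eq_card hB, card_eq_sum_card_fiberwise (f := f) (t := Ioc k T)]
  · refine sum_congr rfl fun c hc => ?_
    rw [pmult_eq_card hB (by simp at hc; omega), filter_filter]
    congr 1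
    ext j
    simp only [mem_filter, mem_Ioc] at hc ⊢
    constructor
    · exact fun h => ⟨h.1, h.2.2⟩
    · rintro ⟨hj, rfl⟩
      exact ⟨hj, hc.1, rfl⟩
  · intro j hj
    simp only [coe_filter, Set.mem_ofPred_eq, mem_range] at hj
    simpa using ⟨hj.2, hT j⟩

theorem sum_range_ptrans_of_le (hf : Antitone f) (hB : ∀ j, B ≤ j → f j = 0) {K : ℕ}
    (hK : f 0 ≤ K) : ∑ k ∈ range K, ptrans f k = ∑ j ∈ range B, f j := by
  rw [sum_range_ptrans hB]
  exact sum_congr rfl fun j _ => min_eq_left ((hf j.zero_le).trans hK)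

end Transpose

namespace IsPartitionOf

variable {f : ℕ → ℕ} {d : ℕ}

theorem sum_range_ptrans (hf : IsPartitionOf f d) {K : ℕ} (hK : f 0 ≤ K) :
    ∑ k ∈ range K, ptrans f k = d := by
  obtain ⟨hanti, B, hB, rfl⟩ := hf
  exact sum_range_ptrans_of_le hanti hB hK

theorem transpose (hf : IsPartitionOf f d) : IsPartitionOf (ptrans f) d := by
  obtain ⟨B, hB, -⟩ := hf.2
  exact ⟨antitone_ptrans hf.1 hB, f 0, fun k => ptrans_eq_zero hf.1 hB,
    hf.sum_range_ptrans le_rfl⟩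

theorem exists_split_sum_range_ptrans (hf : IsPartitionOf f d) (t : ℕ) :
    ∃ M, ∑ j ∈ range t, f j + ∑ j ∈ Ico t M, f j = d ∧
      ∀ K, ∑ k ∈ range K, ptrans f k =
        ∑ j ∈ range t, min (f j) K + ∑ j ∈ Ico t M, min (f j) K := by
  obtain ⟨-, B, hB, rfl⟩ := hf
  refine ⟨t + B, ?_, fun K => ?_⟩
  · rw [sum_range_add_sum_Ico _ (by omega), sum_range_eq_of_le hB (by omega)]
  · rw [sum_range_add_sum_Ico _ (by omega), _root_.sum_range_ptrans hB,
      sum_range_eq_of_le (f := fun j => min (f j) K) (fun j hj => by simp [hB j hj])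
        (show B ≤ t + B by omega)]

/- Rows `< t` and columns `< K` of the diagram of `f` overlap in at most a `t × K` rectangle;
for `t = ptrans f K` they cover the diagram and the overlap is the whole rectangle. -/
theorem sum_range_add_sum_range_ptrans_le (hf : IsPartitionOf f d) (t K : ℕ) :
    ∑ j ∈ range t, f j + ∑ k ∈ range K, ptrans f k ≤ t * K + d := by
  obtain ⟨M, hd, hK⟩ := hf.exists_split_sum_range_ptrans t
  have h₁ : ∑ j ∈ range t, min (f j) K ≤ t * K := by
    simpa using sum_le_sum fun j (_ : j ∈ range t) => min_le_right (f j) K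
  have h₂ : ∑ j ∈ Ico t M, min (f j) K ≤ ∑ j ∈ Ico t M, f j :=
    sum_le_sum fun j _ => min_le_left _ _
  rw [hK]
  omega

theorem sum_range_add_sum_range_ptrans_eq (hf : IsPartitionOf f d) (K : ℕ) :
    ∑ j ∈ range (ptrans f K), f j + ∑ k ∈ range K, ptrans f k =
      ptrans f K * K + d := by
  obtain ⟨B, hB, -⟩ := hf.2
  obtain ⟨M, hd, hK⟩ := hf.exists_split_sum_range_ptrans (ptrans f K)
  have h₁ : ∑ j ∈ range (ptrans f K), min (f j) K = ptrans f K * K := by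
    simpa using sum_congr rfl fun j (hj : j ∈ range _) =>
      min_eq_right ((lt_ptrans_iff hf.1 hB).mp (mem_range.mp hj)).le
  have h₂ : ∑ j ∈ Ico (ptrans f K) M, min (f j) K = ∑ j ∈ Ico (ptrans f K) M, f j :=
    sum_congr rfl fun j hj => min_eq_left <| not_lt.mp fun h =>
      (mem_Ico.mp hj).1.not_gt ((lt_ptrans_iff hf.1 hB).mpr h)
  rw [hK]
  omega

end IsPartitionOf

theorem nDomLE_ptrans_of_nDomLE_ptrans {x y : ℕ → ℕ} {d : ℕ} (hx : IsPartitionOf x d)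
    (hy : IsPartitionOf y d) (h : NDomLE x (ptrans y)) : NDomLE y (ptrans x) := by
  intro K
  have hxK := hx.sum_range_add_sum_range_ptrans_eq K
  have hyK := hy.sum_range_add_sum_range_ptrans_le K (ptrans x K)
  have := h (ptrans x K)
  rw [Nat.mul_comm] at hyK
  omega

namespace IsUnionOf

variable {u f g : ℕ → ℕ} {d₁ d₂ : ℕ}

theorem ptrans_eq (hu : IsUnionOf u f g) (hf : IsPartitionOf f d₁) (hg : IsPartitionOf g d₂)
    (k : ℕ) : ptrans u k = ptrans f k + ptrans g k := by
  obtain ⟨hu, ⟨Bu, hBu⟩, hmult⟩ := hu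
  obtain ⟨hf, Bf, hBf, -⟩ := hf
  obtain ⟨hg, Bg, hBg, -⟩ := hg
  set T := u 0 + f 0 + g 0
  rw [ptrans_eq_sum_pmult hBu (T := T) fun j => by have := hu j.zero_le; omega,
    ptrans_eq_sum_pmult hBf (T := T) fun j => by have := hf j.zero_le; omega,
    ptrans_eq_sum_pmult hBg (T := T) fun j => by have := hg j.zero_le; omega,
    ← sum_add_distrib]
  exact sum_congr rfl fun c hc => hmult c (Nat.zero_lt_of_lt (mem_Ioc.mp hc).1)

theorem isPartitionOf (hu : IsUnionOf u f g) (hf : IsPartitionOf f d₁)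
    (hg : IsPartitionOf g d₂) : IsPartitionOf u (d₁ + d₂) := by
  obtain ⟨Bu, hBu⟩ := hu.2.1
  refine ⟨hu.1, Bu, hBu, ?_⟩
  set K := u 0 + f 0 + g 0
  rw [← sum_range_ptrans_of_le hu.1 hBu (K := K) (by omega)]
  simp only [hu.ptrans_eq hf hg, sum_add_distrib]
  rw [hf.sum_range_ptrans (by omega), hg.sum_range_ptrans (by omega)]

theorem isOrthogonal (hu : IsUnionOf u f g) (hf : IsOrthogonal f) (hg : IsOrthogonal g) :
    IsOrthogonal u := fun k hk hke => by
  rw [hu.2.2 k hk]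
  exact (hf k hk hke).add (hg k hk hke)

end IsUnionOf

section Parity

variable {f : ℕ → ℕ} {d : ℕ}

theorem IsPartitionOf.mod_two_eq_of_isSymplectic_ptrans (hf : IsPartitionOf f d)
    (hs : IsSymplectic (ptrans f)) (i : ℕ) : f (2 * i) % 2 = f (2 * i + 1) % 2 := by
  obtain ⟨hf, B, hB, -⟩ := hf
  have hmult := pmult_succ (fun k => ptrans_eq_zero hf hB (m := k)) (2 * i)
  rw [ptrans_ptrans hf hB] at hmult
  obtain ⟨r, hr⟩ := hs (2 * i + 1) (by omega) (odd_two_mul_add_one i)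
  have := hf (show 2 * i ≤ 2 * i + 1 by omega)
  omega

theorem IsPartitionOf.ptrans_mod_two_eq_of_isOrthogonal (hf : IsPartitionOf f d)
    (ho : IsOrthogonal f) (i : ℕ) : ptrans f (2 * i + 1) % 2 = ptrans f (2 * i + 2) % 2 := by
  obtain ⟨hf, B, hB, -⟩ := hf
  have hmult : pmult f (2 * i + 2) = ptrans f (2 * i + 1) - ptrans f (2 * i + 2) :=
    pmult_succ hB (2 * i + 1)
  obtain ⟨r, hr⟩ := ho (2 * i + 2) (by omega) ⟨i + 1, by ring⟩
  have := antitone_ptrans hf hB (show 2 * i + 1 ≤ 2 * i + 2 by omega)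
  omega

theorem IsPartitionOf.succ_eq_of_isOrthogonal (hf : IsPartitionOf f d) (ho : IsOrthogonal f)
    (hpair : ∀ i, f (2 * i) % 2 = f (2 * i + 1) % 2) (i : ℕ) (hfi : f (2 * i) % 2 = 0) :
    f (2 * i + 1) = f (2 * i) := by
  obtain ⟨hf, B, hB, -⟩ := hf
  -- The block of parts equal to `f (2 * i)` has even length and, by induction, starts at an
  -- even index.
  induction i using Nat.strong_induction_on with
  | _ i ih =>
    have hle := hf (show 2 * i ≤ 2 * i + 1 by omega)
    rcases Nat.eq_zero_or_pos (f (2 * i)) with hzero | hpos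
    · omega
    obtain ⟨m, hm⟩ : ∃ m, f (2 * i) = m + 1 := ⟨f (2 * i) - 1, by omega⟩
    have hblock : ∀ j, f j = m + 1 ↔ ptrans f (m + 1) ≤ j ∧ j < ptrans f m := fun j => by
      rw [lt_ptrans_iff hf hB, ← not_lt, lt_ptrans_iff hf hB]
      omega
    obtain ⟨r, hr⟩ := ho (m + 1) m.succ_pos (Nat.even_iff.mpr (by omega))
    have hmult := pmult_succ hB m
    have hi := (hblock (2 * i)).mp hm
    have hstart : ptrans f (m + 1) % 2 = 0 := by
      by_contra hodd
      obtain ⟨k, hk⟩ : ∃ k, ptrans f (m + 1) = 2 * k + 1 := ⟨ptrans f (m + 1) / 2, by omega⟩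
      have hk1 := (hblock (2 * k + 1)).mpr (by omega)
      have hk0 := (lt_ptrans_iff hf hB (j := 2 * k) (m := m + 1)).mp (by omega)
      have := ih k (by omega) (by have := hpair k; omega)
      omega
    exact hm ▸ (hblock (2 * i + 1)).mpr (by omega)

theorem even_sum_range_two_mul (hpair : ∀ i, f (2 * i) % 2 = f (2 * i + 1) % 2) (K : ℕ) :
    Even (∑ j ∈ range (2 * K), f j) := by
  induction K with
  | zero => simp
  | succ K ih =>
    rw [show 2 * (K + 1) = 2 * K + 1 + 1 by ring, sum_range_succ, sum_range_succ, add_assoc]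
    exact ih.add (Nat.even_iff.mpr (by have := hpair K; omega))

theorem IsPartitionOf.even_sum_range_two_mul_add_one (hf : IsPartitionOf f d)
    (hd : Even d) (hpair : ∀ i, f (2 * i + 1) % 2 = f (2 * i + 2) % 2) (k : ℕ) :
    Even (∑ j ∈ range (2 * k + 1), f j) := by
  obtain ⟨-, N, hN, hsum⟩ := hf
  have htail : Even (∑ j ∈ range (2 * N), f (2 * k + 1 + j)) :=
    even_sum_range_two_mul (f := fun j => f (2 * k + 1 + j)) (fun i => by
      rw [show 2 * k + 1 + 2 * i = 2 * (k + i) + 1 by ring,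
        show 2 * k + 1 + (2 * i + 1) = 2 * (k + i) + 2 by ring]
      exact hpair (k + i)) N
  rw [← hsum, ← sum_range_eq_of_le hN (show N ≤ 2 * k + 1 + 2 * N by omega), sum_range_add] at hd
  exact (Nat.even_add.mp hd).mpr htail

theorem sum_range_succ_lt_of_odd {ρ : ℕ → ℕ} (hρ : Antitone ρ) (hdom : NDomLE f ρ)
    (hf : ∀ k, Even (∑ j ∈ range (2 * k), f j))
    (hρo : ∀ k, Even (∑ j ∈ range (2 * k + 1), ρ j)) {M : ℕ} (hM : f M % 2 = 1)
    (hM' : M % 2 = 0 ∨ f (M + 1) = f M) :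
    ∑ j ∈ range (M + 1), f j < ∑ j ∈ range (M + 1), ρ j := by
  -- For even `M` the two sums have different parities. For odd `M`, equality would squeeze
  -- `ρ (M + 1) = f (M + 1) = f M`, which is odd, whereas the parity hypotheses make it even.
  rcases Nat.even_or_odd' M with ⟨k, rfl | rfl⟩
  · have := Nat.even_iff.mp (hf k)
    have := Nat.even_iff.mp (hρo k)
    have := hdom (2 * k + 1)
    have := sum_range_succ f (2 * k)
    omega
  · have := Nat.even_iff.mp (hρo k)
    have hf₂ : Even (∑ j ∈ range (2 * k + 1 + 1), f j) := hf (k + 1)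
    have hρ₃ : Even (∑ j ∈ range (2 * k + 1 + 1 + 1), ρ j) := hρo (k + 1)
    rw [Nat.even_iff] at hf₂ hρ₃
    have := hdom (2 * k + 1)
    have := hdom (2 * k + 1 + 1 + 1)
    have := sum_range_succ f (2 * k + 1)
    have := sum_range_succ f (2 * k + 1 + 1)
    have := sum_range_succ ρ (2 * k + 1)
    have := sum_range_succ ρ (2 * k + 1 + 1)
    have := hρ (show 2 * k + 1 ≤ 2 * k + 1 + 1 by omega)
    omega

end Parity

section Waldspurger

variable {f g : ℕ → ℕ} {d : ℕ}

theorem xiSeq_one_one_cases (hd : Even d) (j : ℕ) :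
    (xiSeq f g 1 1 d j = 1 ∧ j % 2 = 0 ∧ f j % 2 = 1 ∧ g j % 2 = 1 ∧
        (j = 0 ∨ f j + g j < f (j - 1) + g (j - 1))) ∨
      (xiSeq f g 1 1 d j = -1 ∧ j % 2 = 1 ∧ f j % 2 = 1 ∧ g j % 2 = 1 ∧
        f (j + 1) + g (j + 1) < f j + g j) ∨
      (xiSeq f g 1 1 d j = 0 ∧
        ¬(j % 2 = 0 ∧ f j % 2 = 1 ∧ g j % 2 = 1 ∧ (j = 0 ∨ f j + g j < f (j - 1) + g (j - 1))) ∧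
        ¬(j % 2 = 1 ∧ f j % 2 = 1 ∧ g j % 2 = 1 ∧ f (j + 1) + g (j + 1) < f j + g j)) := by
  have := Nat.even_iff.mp hd
  unfold xiSeq
  split_ifs with h₁ h₂ <;> omega

theorem sum_range_succ_xiSeq (hd : Even d) (hf : Antitone f) (hg : Antitone g)
    (hfp : ∀ i, f (2 * i) % 2 = f (2 * i + 1) % 2)
    (hgp : ∀ i, g (2 * i) % 2 = g (2 * i + 1) % 2) (N : ℕ) :
    ∑ j ∈ range (N + 1), xiSeq f g 1 1 d j =
      if f N % 2 = 1 ∧ g N % 2 = 1 ∧ (N % 2 = 0 ∨ f (N + 1) + g (N + 1) = f N + g N)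
      then 1 else 0 := by
  induction N with
  | zero =>
    have := xiSeq_one_one_cases (f := f) (g := g) hd 0
    rw [sum_range_one]
    split_ifs <;> omega
  | succ N ih =>
    have hξ := xiSeq_one_one_cases (f := f) (g := g) hd (N + 1)
    rw [Nat.add_sub_cancel] at hξ
    rw [sum_range_succ, ih]
    have := hf (show N ≤ N + 1 by omega)
    have := hf (show N + 1 ≤ N + 1 + 1 by omega)
    have := hg (show N ≤ N + 1 by omega)
    have := hg (show N + 1 ≤ N + 1 + 1 by omega)
    rcases Nat.even_or_odd' N with ⟨i, rfl | rfl⟩ <;>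
    · have := hfp i
      have := hgp i
      split_ifs <;> omega

theorem wald_nonneg (hd : Even d) (j : ℕ) : 0 ≤ wald f g 1 1 d j := by
  have := xiSeq_one_one_cases (f := f) (g := g) hd j
  unfold wald
  omega

variable {w : ℕ → ℕ}

theorem antitone_of_wald (hd : Even d) (hf : Antitone f) (hg : Antitone g)
    (hw : ∀ j, (w j : ℤ) = wald f g 1 1 d j) : Antitone w := by
  refine antitone_nat_of_succ_le fun j => ?_
  have h₀ := hw j
  have h₁ := hw (j + 1)
  have hξ₀ := xiSeq_one_one_cases (f := f) (g := g) hd j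
  have hξ₁ := xiSeq_one_one_cases (f := f) (g := g) hd (j + 1)
  rw [Nat.add_sub_cancel] at hξ₁
  have := hf (show j ≤ j + 1 by omega)
  have := hg (show j ≤ j + 1 by omega)
  unfold wald at h₀ h₁
  omega

theorem eq_zero_of_wald (hd : Even d) {B : ℕ} (hfB : ∀ j, B ≤ j → f j = 0)
    (hgB : ∀ j, B ≤ j → g j = 0) (hw : ∀ j, (w j : ℤ) = wald f g 1 1 d j) (j : ℕ)
    (hj : B ≤ j) : w j = 0 := by
  have h := hw j
  have := xiSeq_one_one_cases (f := f) (g := g) hd j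
  have := hfB j hj
  have := hgB j hj
  unfold wald at h
  omega

theorem cast_sum_range_of_wald (hw : ∀ j, (w j : ℤ) = wald f g 1 1 d j) (N : ℕ) :
    ((∑ j ∈ range N, w j : ℕ) : ℤ) =
      (∑ j ∈ range N, f j : ℕ) + (∑ j ∈ range N, g j : ℕ) + ∑ j ∈ range N, xiSeq f g 1 1 d j := by
  push_cast
  simp only [hw, wald, sum_add_distrib]

theorem isPartitionOf_of_wald {d₁ d₂ : ℕ} (hd : Even (d₁ + d₂)) (hf : IsPartitionOf f d₁)
    (hg : IsPartitionOf g d₂) (hfp : ∀ i, f (2 * i) % 2 = f (2 * i + 1) % 2)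
    (hgp : ∀ i, g (2 * i) % 2 = g (2 * i + 1) % 2)
    (hw : ∀ j, (w j : ℤ) = wald f g 1 1 (d₁ + d₂) j) : IsPartitionOf w (d₁ + d₂) := by
  obtain ⟨hfa, B₁, hB₁, hsum₁⟩ := hf
  obtain ⟨hga, B₂, hB₂, hsum₂⟩ := hg
  set B := B₁ + B₂
  have hfB : ∀ j, B ≤ j → f j = 0 := fun j hj => hB₁ j (by omega)
  have hgB : ∀ j, B ≤ j → g j = 0 := fun j hj => hB₂ j (by omega)
  refine ⟨antitone_of_wald hd hfa hga hw, B + 1, fun j hj => eq_zero_of_wald hd hfB hgB hw j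
    (by omega), ?_⟩
  have hξ := sum_range_succ_xiSeq hd hfa hga hfp hgp B
  rw [if_neg (by simp [hfB B le_rfl])] at hξ
  have hsum := cast_sum_range_of_wald hw (B + 1)
  rw [hξ, sum_range_eq_of_le hB₁ (by omega), sum_range_eq_of_le hB₂ (by omega), hsum₁,
    hsum₂] at hsum
  omega

theorem even_card_xiSeq_eq_zero_of_odd (hd : Even d) (hf : Antitone f) (hg : Antitone g)
    {a b v : ℕ} (hblock : ∀ j, f j + g j = v ↔ a ≤ j ∧ j < b)
    (hodd : ∀ j, a ≤ j → j < b → f j % 2 = 1 ∧ g j % 2 = 1) :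
    Even #{j ∈ Ico a b | xiSeq f g 1 1 d j = 0} := by
  -- `ξ` is `1` at the first index of the block if it is even and `-1` at the last if it is odd,
  -- so its zeros form an interval with odd endpoints.
  have hzero :
      {j ∈ Ico a b | xiSeq f g 1 1 d j = 0} = Ico (a + (a + 1) % 2) (b - (b + 1) % 2) := by
    ext j
    simp only [mem_filter, mem_Ico]
    have := xiSeq_one_one_cases (f := f) (g := g) hd j
    have := hblock (j - 1)
    have := hblock j
    have := hblock (j + 1)
    have := hf (show j - 1 ≤ j by omega)
    have := hf (show j ≤ j + 1 by omega)
    have := hg (show j - 1 ≤ j by omega)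
    have := hg (show j ≤ j + 1 by omega)
    by_cases hj : a ≤ j ∧ j < b
    · have := hodd j hj.1 hj.2
      omega
    · omega
  rw [hzero, Nat.card_Ico, Nat.even_iff]
  omega

theorem even_card_xiSeq_eq_zero_of_not_odd (hd : Even d) {a b v : ℕ} (hv : v % 2 = 0)
    (hblock : ∀ j, f j + g j = v ↔ a ≤ j ∧ j < b)
    (hodd : ∀ j, a ≤ j → j < b → ¬(f j % 2 = 1 ∧ g j % 2 = 1))
    (hfp : ∀ i, f (2 * i) % 2 = f (2 * i + 1) % 2)
    (hgp : ∀ i, g (2 * i) % 2 = g (2 * i + 1) % 2)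
    (hfe : ∀ i, f (2 * i) % 2 = 0 → f (2 * i + 1) = f (2 * i))
    (hge : ∀ i, g (2 * i) % 2 = 0 → g (2 * i + 1) = g (2 * i)) :
    Even #{j ∈ Ico a b | xiSeq f g 1 1 d j = 0} := by
  -- Both parts are even on the block, and equal even parts come in pairs `(2k, 2k+1)`, so the
  -- block starts and ends at even indices.
  have hzero : {j ∈ Ico a b | xiSeq f g 1 1 d j = 0} = Ico a b :=
    filter_true_of_mem fun j hj => by
      have := hodd j (mem_Ico.mp hj).1 (mem_Ico.mp hj).2
      have := xiSeq_one_one_cases (f := f) (g := g) hd j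
      omega
  have heven : ∀ j, a ≤ j → j < b → f j % 2 = 0 ∧ g j % 2 = 0 := fun j ha hb => by
    have := (hblock j).mpr ⟨ha, hb⟩
    have := hodd j ha hb
    omega
  have hstart : b ≤ a ∨ a % 2 = 0 := by
    by_contra! h
    obtain ⟨k, rfl⟩ : ∃ k, a = 2 * k + 1 := ⟨a / 2, by omega⟩
    have := heven (2 * k + 1) le_rfl h.1
    have := hfp k
    have := hgp k
    have := hfe k (by omega)
    have := hge k (by omega)
    have := hblock (2 * k)
    have := hblock (2 * k + 1)
    omega
  have hend : b ≤ a ∨ b % 2 = 0 := by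
    by_contra! h
    obtain ⟨k, rfl⟩ : ∃ k, b = 2 * k + 1 := ⟨b / 2, by omega⟩
    have := heven (2 * k) (by omega) (by omega)
    have := hfe k (by omega)
    have := hge k (by omega)
    have := hblock (2 * k)
    have := hblock (2 * k + 1)
    omega
  rw [hzero, Nat.card_Ico, Nat.even_iff]
  omega

theorem isOrthogonal_of_wald {d₁ d₂ : ℕ} (hd : Even d) (hf : IsPartitionOf f d₁)
    (hfo : IsOrthogonal f) (hfp : ∀ i, f (2 * i) % 2 = f (2 * i + 1) % 2)
    (hg : IsPartitionOf g d₂) (hgo : IsOrthogonal g)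
    (hgp : ∀ i, g (2 * i) % 2 = g (2 * i + 1) % 2)
    (hw : ∀ j, (w j : ℤ) = wald f g 1 1 d j) : IsOrthogonal w := by
  have hfe := hf.succ_eq_of_isOrthogonal hfo hfp
  have hge := hg.succ_eq_of_isOrthogonal hgo hgp
  obtain ⟨hf, B₁, hB₁, -⟩ := hf
  obtain ⟨hg, B₂, hB₂, -⟩ := hg
  set B := B₁ + B₂
  have hfB : ∀ j, B ≤ j → f j = 0 := fun j hj => hB₁ j (by omega)
  have hgB : ∀ j, B ≤ j → g j = 0 := fun j hj => hB₂ j (by omega)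
  intro v hv hve
  obtain ⟨m, rfl⟩ : ∃ m, v = m + 1 := ⟨v - 1, by omega⟩
  have hs : Antitone fun j => f j + g j := hf.add hg
  have hsB : ∀ j, B ≤ j → f j + g j = 0 := fun j hj => by simp [hfB j hj, hgB j hj]
  set a := ptrans (fun j => f j + g j) (m + 1)
  set b := ptrans (fun j => f j + g j) m
  have hblock : ∀ j, f j + g j = m + 1 ↔ a ≤ j ∧ j < b := fun j => by
    rw [lt_ptrans_iff hs hsB, ← not_lt, lt_ptrans_iff hs hsB]
    omega
  -- `ξ j ≠ 0` forces both parts to be odd, and then `w j = s j ± 1` is odd.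
  have hwj : ∀ j, w j = m + 1 ↔ (a ≤ j ∧ j < b) ∧ xiSeq f g 1 1 d j = 0 := fun j => by
    have := Nat.even_iff.mp hve
    have h := hw j
    have := xiSeq_one_one_cases (f := f) (g := g) hd j
    rw [← hblock]
    unfold wald at h
    omega
  have hbB : b ≤ B := ptrans_le hsB m
  rw [pmult_eq_card (eq_zero_of_wald hd hfB hgB hw) m.succ_pos,
    show {j ∈ range B | w j = m + 1} = {j ∈ Ico a b | xiSeq f g 1 1 d j = 0} by
      ext j
      simp only [mem_filter, mem_range, mem_Ico, hwj]
      omega]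
  by_cases hodd : ∃ j, (a ≤ j ∧ j < b) ∧ f j % 2 = 1 ∧ g j % 2 = 1
  · obtain ⟨j₀, hj₀, hodd⟩ := hodd
    refine even_card_xiSeq_eq_zero_of_odd hd hf hg hblock fun j ha hb => ?_
    have := (hblock j).mpr ⟨ha, hb⟩
    have := (hblock j₀).mpr hj₀
    rcases le_total j j₀ with h | h
    · have := hf h
      have := hg h
      omega
    · have := hf h
      have := hg h
      omega
  · push Not at hodd
    exact even_card_xiSeq_eq_zero_of_not_odd hd (Nat.even_iff.mp hve) hblock
      (fun j ha hb h => hodd j ⟨ha, hb⟩ h.1 h.2) hfp hgp hfe hge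

theorem nDomLE_of_wald {ρ₁ ρ₂ : ℕ → ℕ} (hd : Even d) (hf : Antitone f) (hg : Antitone g)
    (hfp : ∀ i, f (2 * i) % 2 = f (2 * i + 1) % 2)
    (hgp : ∀ i, g (2 * i) % 2 = g (2 * i + 1) % 2)
    (hw : ∀ j, (w j : ℤ) = wald f g 1 1 d j) (hρ₁ : Antitone ρ₁)
    (hρ₁o : ∀ k, Even (∑ j ∈ range (2 * k + 1), ρ₁ j)) (hdom₁ : NDomLE f ρ₁)
    (hdom₂ : NDomLE g ρ₂) : NDomLE w fun j => ρ₁ j + ρ₂ j := by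
  rintro (_ | M)
  · simp
  have hsum := cast_sum_range_of_wald hw (M + 1)
  rw [sum_range_succ_xiSeq hd hf hg hfp hgp] at hsum
  rw [sum_add_distrib]
  have := hdom₁ (M + 1)
  have := hdom₂ (M + 1)
  split_ifs at hsum with hodd
  · have := hf (show M ≤ M + 1 by omega)
    have := hg (show M ≤ M + 1 by omega)
    have := sum_range_succ_lt_of_odd hρ₁ hdom₁ (even_sum_range_two_mul hfp) hρ₁o hodd.1
      (by omega)
    omega
  · omega

end Waldspurger

/-- type D.  `d₁, d₂` even, `d = d₁+d₂`, `λ₁, λ₂` special orthogonal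
partitions of `d₁, d₂`, `W = W(λ₁,λ₂)` with `ε₁ = ε₂ = 1`.
(i) `W` is an orthogonal partition of `d`;
(ii) if `ν₁, ν₂, ν` are D-collapses of `λ₁ᵗ`, `λ₂ᵗ`, `Wᵗ` then `ν₁ ∪ ν₂ ≤ ν`;
(iii) if moreover `η` is a D-collapse of `(ν₁ ∪ ν₂)ᵗ` then `W ≤ η`. -/
theorem stmt2 (d1 d2 : ℕ) (hd1 : Even d1) (hd2 : Even d2) (lam1 lam2 : ℕ → ℕ)
    (h1 : IsPartitionOf lam1 d1) (h1o : IsOrthogonal lam1)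
    (h1s : IsSymplectic (ptrans lam1))
    (h2 : IsPartitionOf lam2 d2) (h2o : IsOrthogonal lam2)
    (h2s : IsSymplectic (ptrans lam2)) :
    (∃ w : ℕ → ℕ, (∀ j, (w j : ℤ) = wald lam1 lam2 1 1 (d1+d2) j) ∧
        IsPartitionOf w (d1+d2) ∧ IsOrthogonal w) ∧
    (∀ w : ℕ → ℕ, (∀ j, (w j : ℤ) = wald lam1 lam2 1 1 (d1+d2) j) →
      ∀ ν1 ν2 ν : ℕ → ℕ,
        IsDCollapse d1 (ptrans lam1) ν1 →
        IsDCollapse d2 (ptrans lam2) ν2 →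
        IsDCollapse (d1+d2) (ptrans w) ν →
        ∀ u : ℕ → ℕ, IsUnionOf u ν1 ν2 →
          NDomLE u ν ∧
          ∀ η : ℕ → ℕ, IsDCollapse (d1+d2) (ptrans u) η →
            NDomLE w η) := by
  have hd : Even (d1 + d2) := hd1.add hd2
  have hp1 := h1.mod_two_eq_of_isSymplectic_ptrans h1s
  have hp2 := h2.mod_two_eq_of_isSymplectic_ptrans h2s
  have hW (w : ℕ → ℕ) (hw : ∀ j, (w j : ℤ) = wald lam1 lam2 1 1 (d1 + d2) j) :
      IsPartitionOf w (d1 + d2) ∧ IsOrthogonal w :=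
    ⟨isPartitionOf_of_wald hd h1 h2 hp1 hp2 hw,
      isOrthogonal_of_wald hd h1 h1o hp1 h2 h2o hp2 hw⟩
  have hw₀ (j : ℕ) :
      ((wald lam1 lam2 1 1 (d1 + d2) j).toNat : ℤ) = wald lam1 lam2 1 1 (d1 + d2) j :=
    Int.toNat_of_nonneg (wald_nonneg hd j)
  refine ⟨⟨_, hw₀, hW _ hw₀⟩, fun w hw ν1 ν2 ν hν1 hν2 hν u hu => ?_⟩
  obtain ⟨hwp, hwo⟩ := hW w hw
  have hup := hu.isPartitionOf hν1.1 hν2.1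
  have hwu : NDomLE w (ptrans u) := by
    rw [funext (hu.ptrans_eq hν1.1 hν2.1)]
    exact nDomLE_of_wald hd h1.1 h2.1 hp1 hp2 hw hν1.1.transpose.1
      (hν1.1.transpose.even_sum_range_two_mul_add_one hd1
        (hν1.1.ptrans_mod_two_eq_of_isOrthogonal hν1.2.1))
      (nDomLE_ptrans_of_nDomLE_ptrans hν1.1 h1 hν1.2.2.1)
      (nDomLE_ptrans_of_nDomLE_ptrans hν2.1 h2 hν2.2.2.1)
  exact ⟨hν.2.2.2 u hup (hu.isOrthogonal hν1.2.1 hν2.2.1)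
      (nDomLE_ptrans_of_nDomLE_ptrans hwp hup hwu),
    fun η hη => hη.2.2.2 w hwp hwo hwu⟩
end

section
/- Let d_1 = 2n_1+1 and d_2 = 2n_2+1 be odd numbers, d = d_1+d_2−1, and let λ_1, λ_2 be special orthogonal partitions of d_1 and d_2. Then W = W(λ_1,λ_2) (type B data) is an orthogonal partition of d and D_o(W) = D_o(λ_1) + D_o(λ_2) + d(d−1)/2 − d_1(d_1−1)/2 − d_2(d_2−1)/2. -/
/-- Sum of squares of the transpose parts: `Σ_k ((λᵗ)_k)²` (k ranges over 1,…,λ₁). -/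
noncomputable def sumSqTrans (f : ℕ → ℕ) : ℕ := ∑ k ∈ Finset.range (f 0), (ptrans f k)^2

/-- Number of odd parts `#{j : λ_j odd}`. -/
noncomputable def oddCount (f : ℕ → ℕ) : ℕ := Nat.card {j : ℕ // Odd (f j)}

/-- `D_o(λ) = N(N−1)/2 − (Σ_k ((λᵗ)_k)² − #{odd parts})/2`, the dimension of the
nilpotent orbit of Jordan type `λ` in `so_N`. -/
noncomputable def Dorth (f : ℕ → ℕ) (N : ℕ) : ℚ :=
  (N : ℚ) * ((N : ℚ) - 1) / 2 - ((sumSqTrans f : ℚ) - (oddCount f : ℚ)) / 2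

/-- `D_sp(λ) = n(2n+1) − (Σ_k ((λᵗ)_k)² + #{odd parts})/2`, the dimension of the
nilpotent orbit of Jordan type `λ` in `sp_{2n}`. -/
noncomputable def Dsymp (f : ℕ → ℕ) (n : ℕ) : ℚ :=
  (n : ℚ) * (2 * (n : ℚ) + 1) - ((sumSqTrans f : ℚ) + (oddCount f : ℚ)) / 2

/-!
Index the parts from `0`. A special orthogonal partition `λ` of an odd number is read in the blocks
`λ₀ | λ₁ λ₂ | λ₃ λ₄ | …`: `λᵗ` orthogonal makes the two parts of a block congruent mod 2, the odd
size then makes `λ₀` odd, and `λ` orthogonal forces the two parts of a block to be equal when even.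

For two such partitions, `ξ` lives on the pairs `(2i, 2i+1)` across which `λ₁+λ₂` drops, where it
is `-r(2i), +r(2i+1)` with `r` the indicator of "both parts odd". Since `r(2i+1) = r(2i+2)` and
`r(0) = 1`, the sum of `ξ` telescopes to `-1`, so `W` is a partition of `d₁ + d₂ - 1`; and an even
part of `W` occurs where `ξ = 0` and both parts have the same parity, its positions pairing up as
`(2i, 2i+1)` (odd parts) or `(2i+1, 2i+2)` (even parts), so its multiplicity is even.

For the dimension, `Σ_k ((λᵗ)_k)² = Σ_j (2j+1) λ_j`, so everything reduces to
`Σ_j (2j+1) ξ_j = #{odd parts of W} - #{odd parts of λ₁} - #{odd parts of λ₂}`, which is again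
a telescoping sum of `r` over the pairs.
-/

open Finset

lemma sum_range_eq_of_vanish {M : Type*} [AddCommMonoid M] {F : ℕ → M} {N K : ℕ}
    (hN : ∀ j, N ≤ j → F j = 0) (hNK : N ≤ K) :
    ∑ j ∈ range K, F j = ∑ j ∈ range N, F j :=
  (sum_subset (range_subset_range.2 hNK) fun j _ hj => hN j (by simpa using hj)).symm

lemma sum_range_two_mul {M : Type*} [AddCommMonoid M] (F : ℕ → M) (n : ℕ) :
    ∑ j ∈ range (2 * n), F j = ∑ i ∈ range n, (F (2 * i) + F (2 * i + 1)) := by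
  induction n with
  | zero => simp
  | succ n ih => rw [mul_add, mul_one, sum_range_succ, sum_range_succ, ih, sum_range_succ, add_assoc]

lemma sum_range_two_mul_add_one (n : ℕ) : ∑ j ∈ range n, (2 * j + 1) = n ^ 2 := by
  induction n with
  | zero => simp
  | succ n ih => rw [sum_range_succ, ih]; ring

section Telescoping

variable (R : ℕ → ℤ) (hR : ∀ i, R (2 * i + 2) = R (2 * i + 1))
include hR

lemma sum_sub_of_pairs (M : ℕ) :
    ∑ i ∈ range M, (R (2 * i + 1) - R (2 * i)) = R (2 * M) - R 0 := by
  rw [← sum_range_sub (fun i => R (2 * i))]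
  refine sum_congr rfl fun i _ => ?_
  rw [mul_add, mul_one, hR]

lemma sum_mul_sub_of_pairs (M : ℕ) :
    ∑ i ∈ range M, (4 * i + 2 : ℤ) * (R (2 * i + 1) - R (2 * i))
      = 4 * M * R (2 * M) - 2 * ∑ j ∈ range (2 * M), R j := by
  induction M with
  | zero => simp
  | succ M ih =>
    rw [sum_range_succ, ih, mul_add 2 M 1, mul_one, sum_range_succ, sum_range_succ, hR]
    push_cast
    ring

end Telescoping

section Counting

variable {h : ℕ → ℕ} {N : ℕ}

lemma natCard_subtype_eq_card {P : ℕ → Prop} (s : Finset ℕ) (hs : ∀ j, P j ↔ j ∈ s) :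
    Nat.card {j // P j} = #s := by
  rw [Nat.card_congr (Equiv.subtypeEquivRight hs), Nat.card_eq_fintype_card, Fintype.card_coe]

lemma exists_forall_lt_apply_iff (hh : Antitone h) (hN : ∀ j, N ≤ j → h j = 0) (k : ℕ) :
    ∃ m, ∀ j, k < h j ↔ j < m := by
  classical
  have hex : ∃ m, h m ≤ k := ⟨N, by simp [hN N le_rfl]⟩
  refine ⟨Nat.find hex, fun j => ⟨fun hj => ?_, fun hj => not_le.1 (Nat.find_min hex hj)⟩⟩
  by_contra hle
  exact (hh (not_lt.1 hle)).trans (Nat.find_spec hex) |>.not_gt hj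

lemma ptrans_eq_of_forall_lt_iff {k m : ℕ} (hm : ∀ j, k < h j ↔ j < m) : ptrans h k = m := by
  rw [ptrans, natCard_subtype_eq_card (range m) fun j => by simpa using hm j, card_range]

lemma lt_ptrans_iff_s3 (hh : Antitone h) (hN : ∀ j, N ≤ j → h j = 0) {j k : ℕ} :
    j < ptrans h k ↔ k < h j := by
  obtain ⟨m, hm⟩ := exists_forall_lt_apply_iff hh hN k
  rw [ptrans_eq_of_forall_lt_iff hm, hm]

lemma pmult_succ_eq_sub {p : ℕ → ℕ} {k a b : ℕ} (ha : ∀ j, k < p j ↔ j < a)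
    (hb : ∀ j, k + 1 < p j ↔ j < b) : pmult p (k + 1) = a - b := by
  rw [pmult, natCard_subtype_eq_card (Ico b a) fun j => ?_, Nat.card_Ico]
  simp only [mem_Ico, ← not_lt, ← ha, ← hb]
  omega

lemma pmult_succ_eq_ptrans_sub (hh : Antitone h) (hN : ∀ j, N ≤ j → h j = 0) (k : ℕ) :
    pmult h (k + 1) = ptrans h k - ptrans h (k + 1) :=
  pmult_succ_eq_sub (fun _ => (lt_ptrans_iff_s3 hh hN).symm) fun _ => (lt_ptrans_iff_s3 hh hN).symm

lemma pmult_ptrans_succ (hh : Antitone h) (hN : ∀ j, N ≤ j → h j = 0) (k : ℕ) :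
    pmult (ptrans h) (k + 1) = h k - h (k + 1) :=
  pmult_succ_eq_sub (fun _ => lt_ptrans_iff_s3 hh hN) fun _ => lt_ptrans_iff_s3 hh hN

/-- Each square `((λᵗ)_k)²` is a sum of odd numbers `2j+1` over the rows `j` of column `k`. -/
lemma sumSqTrans_eq (hh : Antitone h) (hN : ∀ j, N ≤ j → h j = 0) :
    sumSqTrans h = ∑ j ∈ range N, (2 * j + 1) * h j := by
  have hcol : ∀ k, range (ptrans h k) = (range N).filter (k < h ·) := by
    intro k
    ext j
    simp only [mem_range, mem_filter, lt_ptrans_iff_s3 hh hN]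
    refine ⟨fun hk => ⟨not_le.1 fun hj => ?_, hk⟩, And.right⟩
    simp [hN j hj] at hk
  have hrow : ∀ j, (range (h 0)).filter (· < h j) = range (h j) := by
    intro j
    ext k
    simp only [mem_filter, mem_range]
    have := hh (Nat.zero_le j)
    omega
  calc sumSqTrans h
      = ∑ k ∈ range (h 0), ∑ j ∈ range N, if k < h j then 2 * j + 1 else 0 := by
        refine sum_congr rfl fun k _ => ?_
        rw [← sum_range_two_mul_add_one, hcol, sum_filter]
    _ = ∑ j ∈ range N, ∑ k ∈ range (h 0), if k < h j then 2 * j + 1 else 0 := sum_comm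
    _ = ∑ j ∈ range N, (2 * j + 1) * h j := by
        refine sum_congr rfl fun j _ => ?_
        rw [← sum_filter, hrow, sum_const, card_range, smul_eq_mul, mul_comm]

lemma oddCount_eq (hN : ∀ j, N ≤ j → h j = 0) :
    oddCount h = ∑ j ∈ range N, if h j % 2 = 1 then 1 else 0 := by
  rw [oddCount, natCard_subtype_eq_card ((range N).filter fun j => h j % 2 = 1), card_filter]
  intro j
  simp only [mem_filter, mem_range, Nat.odd_iff]
  refine ⟨fun hj => ⟨not_le.1 fun hNj => ?_, hj⟩, And.right⟩
  simp [hN j hNj] at hj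

lemma even_pmult_of_involution {k : ℕ} (hN : ∀ j, N ≤ j → h j = 0) (hk : 0 < k) (σ : ℕ → ℕ)
    (hσ : ∀ j, h j = k → h (σ j) = k ∧ σ j ≠ j ∧ σ (σ j) = j) : Even (pmult h k) := by
  classical
  have hs : ∀ j, h j = k ↔ j ∈ (range N).filter (h · = k) := by
    intro j
    simp only [mem_filter, mem_range]
    refine ⟨fun hj => ⟨not_le.1 fun hNj => ?_, hj⟩, And.right⟩
    rw [hN j hNj] at hj
    omega
  rw [pmult, natCard_subtype_eq_card _ hs, ← ZMod.natCast_eq_zero_iff_even, card_eq_sum_ones,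
    Nat.cast_sum, Nat.cast_one]
  refine sum_involution (fun j _ => σ j) (fun _ _ => by decide) (fun j hj _ => ?_)
    (fun j hj => ?_) fun j hj => ?_
  · exact (hσ j ((hs j).2 hj)).2.1
  · exact (hs _).1 (hσ j ((hs j).2 hj)).1
  · exact (hσ j ((hs j).2 hj)).2.2

end Counting

section Pairing

/-- The parity pattern of a special orthogonal partition of an odd number, read in the blocks
`λ₀ | λ₁ λ₂ | λ₃ λ₄ | …` (0-indexed). -/
structure IsBPaired (f : ℕ → ℕ) : Prop where
  zero_odd : f 0 % 2 = 1
  parity_eq : ∀ i, f (2 * i + 2) % 2 = f (2 * i + 1) % 2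
  eq_of_even : ∀ i, f (2 * i + 1) % 2 = 0 → f (2 * i + 2) = f (2 * i + 1)

variable {h : ℕ → ℕ} {N : ℕ}

lemma parity_eq_of_isOrthogonal_ptrans (hh : Antitone h) (hN : ∀ j, N ≤ j → h j = 0)
    (ht : IsOrthogonal (ptrans h)) (i : ℕ) : h (2 * i + 2) % 2 = h (2 * i + 1) % 2 := by
  show h (2 * i + 1 + 1) % 2 = h (2 * i + 1) % 2
  have heven := ht (2 * i + 1 + 1) (by omega) ⟨i + 1, by ring⟩
  rw [pmult_ptrans_succ hh hN, Nat.even_iff] at heven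
  have := hh (by omega : 2 * i + 1 ≤ 2 * i + 1 + 1)
  omega

lemma zero_odd_of_sum {n : ℕ} (hN : ∀ j, N ≤ j → h j = 0)
    (hsum : ∑ j ∈ range N, h j = 2 * n + 1)
    (hpar : ∀ i, h (2 * i + 2) % 2 = h (2 * i + 1) % 2) : h 0 % 2 = 1 := by
  have hpairs : Even (∑ i ∈ range N, (h (2 * i + 1) + h (2 * i + 1 + 1))) :=
    even_sum _ fun i _ => Nat.even_iff.2 (by have : h (2 * i + 1 + 1) % 2 = _ := hpar i; omega)
  rw [← sum_range_eq_of_vanish hN (by omega : N ≤ 2 * N + 1), sum_range_succ',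
    sum_range_two_mul] at hsum
  rw [Nat.even_iff] at hpairs
  omega

/-- If `λ_{2i+1} = x` is even but `λ_{2i+2} < x`, the block of parts equal to `x` ends at the odd
index `2i+1` and has even length, so it starts right after a pair `λ_{2i'+1} > λ_{2i'+2} = x`
with `i' < i`: this is a smaller instance of the same situation. -/
lemma eq_of_even_of_isOrthogonal (hh : Antitone h) (hN : ∀ j, N ≤ j → h j = 0)
    (ho : IsOrthogonal h) (h0 : h 0 % 2 = 1)
    (hpar : ∀ i, h (2 * i + 2) % 2 = h (2 * i + 1) % 2) (i : ℕ) :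
    h (2 * i + 1) % 2 = 0 → h (2 * i + 2) = h (2 * i + 1) := by
  induction i using Nat.strong_induction_on with
  | _ i ih =>
  intro heven
  by_contra hne
  have hle := hh (by omega : 2 * i + 1 ≤ 2 * i + 2)
  obtain ⟨k, hk⟩ : ∃ k, h (2 * i + 1) = k + 1 := ⟨h (2 * i + 1) - 1, by omega⟩
  have ha := fun j => lt_ptrans_iff_s3 hh hN (j := j) (k := k)
  have hb := fun j => lt_ptrans_iff_s3 hh hN (j := j) (k := k + 1)
  have hend : ptrans h k = 2 * i + 2 := by
    have := ha (2 * i + 1)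
    have := ha (2 * i + 2)
    omega
  have hmult := ho (k + 1) (by omega) (Nat.even_iff.2 (by omega))
  rw [pmult_succ_eq_ptrans_sub hh hN, hend, Nat.even_iff] at hmult
  have hstart_pos : 0 < ptrans h (k + 1) := by
    have := ha 0
    have := hb 0
    omega
  have hstart_le : ptrans h (k + 1) ≤ 2 * i + 1 := by
    have := hb (2 * i + 1)
    omega
  obtain ⟨i', hi'⟩ : ∃ i', ptrans h (k + 1) = 2 * i' + 2 := ⟨ptrans h (k + 1) / 2 - 1, by omega⟩
  have := hb (2 * i' + 1)
  have := hb (2 * i' + 2)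
  have := ha (2 * i' + 2)
  have := ih i' (by omega) (by have := hpar i'; omega)
  omega

lemma IsBPaired.of_isOrthogonal {n : ℕ} (hp : IsPartitionOf h (2 * n + 1)) (ho : IsOrthogonal h)
    (ht : IsOrthogonal (ptrans h)) : IsBPaired h := by
  obtain ⟨hh, N, hN, hsum⟩ := hp
  have hpar := parity_eq_of_isOrthogonal_ptrans hh hN ht
  have h0 := zero_odd_of_sum hN hsum hpar
  exact ⟨h0, hpar, eq_of_even_of_isOrthogonal hh hN ho h0 hpar⟩

end Pairing

section Waldspurger

variable {f g : ℕ → ℕ} {d : ℕ}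

def oddPair (f g : ℕ → ℕ) (j : ℕ) : ℤ := if f j % 2 = 1 ∧ g j % 2 = 1 then 1 else 0

def waldB (f g : ℕ → ℕ) (d : ℕ) : ℕ → ℕ := fun j => (wald f g 1 1 d j).toNat

/-- The involution pairing up the positions of an even part of `W`: `(2i, 2i+1)` where the part
of `λ₁` is odd, `(2i+1, 2i+2)` where it is even. -/
def partner (f : ℕ → ℕ) (j : ℕ) : ℕ := if (j + f j) % 2 = 1 then j + 1 else j - 1

lemma partner_partner {j : ℕ} (hne : partner f j ≠ j) (hf : f (partner f j) = f j) :
    partner f (partner f j) = j := by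
  by_cases h : (j + f j) % 2 = 1
  · have hp : partner f j = j + 1 := if_pos h
    rw [hp] at hf ⊢
    rw [partner, if_neg (by omega)]
    rfl
  · have hp : partner f j = j - 1 := if_neg h
    rw [hp] at hf hne ⊢
    rw [partner, if_pos (by omega)]
    omega

lemma oddPair_two_mul_add_two (pf : IsBPaired f) (pg : IsBPaired g) (i : ℕ) :
    oddPair f g (2 * i + 2) = oddPair f g (2 * i + 1) := by
  simp only [oddPair, pf.parity_eq i, pg.parity_eq i]

lemma oddPair_zero (pf : IsBPaired f) (pg : IsBPaired g) : oddPair f g 0 = 1 :=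
  if_pos ⟨pf.zero_odd, pg.zero_odd⟩

lemma oddPair_of_eq_zero {j : ℕ} (h : f j = 0) : oddPair f g j = 0 :=
  if_neg (by simp [h])

lemma xiSeq_cases (j : ℕ) :
    xiSeq f g 1 1 d j = 0 ∨
      ((xiSeq f g 1 1 d j = 1 ∨ xiSeq f g 1 1 d j = -1) ∧ f j % 2 = 1 ∧ g j % 2 = 1) := by
  unfold xiSeq
  split_ifs <;> simp_all

lemma xiSeq_of_mod_two_eq_zero {j : ℕ} (h : f j % 2 = 0) : xiSeq f g 1 1 d j = 0 := by
  rcases xiSeq_cases (f := f) (g := g) (d := d) j with hξ | ⟨-, hf, -⟩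
  · exact hξ
  · omega

lemma waldB_cast (j : ℕ) : (waldB f g d j : ℤ) = f j + g j + xiSeq f g 1 1 d j := by
  refine Int.toNat_of_nonneg ?_
  rcases xiSeq_cases (f := f) (g := g) (d := d) j with h | ⟨h, hf, -⟩ <;>
    simp only [wald] <;> omega

lemma waldB_eq_zero {N : ℕ} (hfN : ∀ j, N ≤ j → f j = 0) (hgN : ∀ j, N ≤ j → g j = 0) :
    ∀ j, N ≤ j → waldB f g d j = 0 := by
  intro j hj
  have hw := waldB_cast (f := f) (g := g) (d := d) j
  rw [xiSeq_of_mod_two_eq_zero (by rw [hfN j hj]), hfN j hj, hgN j hj] at hw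
  omega

lemma oddIndicator_waldB (j : ℕ) :
    (if waldB f g d j % 2 = 1 then 1 else 0 : ℤ)
      = (if f j % 2 = 1 then 1 else 0) + (if g j % 2 = 1 then 1 else 0)
        + |xiSeq f g 1 1 d j| - 2 * oddPair f g j := by
  have hw := waldB_cast (f := f) (g := g) (d := d) j
  unfold oddPair
  rcases xiSeq_cases (f := f) (g := g) (d := d) j with h | ⟨h | h, hf, hg⟩ <;>
    rw [h] at hw ⊢ <;> simp only [abs_zero, abs_one, abs_neg] <;> split_ifs <;> omega

lemma xiSeq_two_mul (hd : Odd d) (i : ℕ) :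
    xiSeq f g 1 1 d (2 * i) = if f (2 * i) % 2 = 1 ∧ g (2 * i) % 2 = 1 ∧
      f (2 * i + 1) + g (2 * i + 1) < f (2 * i) + g (2 * i) then -1 else 0 := by
  have := Nat.odd_iff.1 hd
  unfold xiSeq
  rw [if_neg (by omega)]
  exact if_congr (by omega) rfl rfl

lemma xiSeq_two_mul_add_one (hd : Odd d) (i : ℕ) :
    xiSeq f g 1 1 d (2 * i + 1) = if f (2 * i + 1) % 2 = 1 ∧ g (2 * i + 1) % 2 = 1 ∧
      f (2 * i + 1) + g (2 * i + 1) < f (2 * i) + g (2 * i) then 1 else 0 := by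
  have := Nat.odd_iff.1 hd
  unfold xiSeq
  simp only [Nat.add_sub_cancel]
  rw [ite_cond_eq_false _ _ (eq_false (by omega : ¬ ((2 * i + 1 + 1) % 2 = d % 2 ∧ _)))]
  exact if_congr (by omega) rfl rfl

lemma xiSeq_succ_le_of_not_lt (hd : Odd d) {j : ℕ}
    (hj : ¬ f (j + 1) + g (j + 1) < f j + g j) :
    xiSeq f g 1 1 d (j + 1) ≤ xiSeq f g 1 1 d j := by
  obtain ⟨i, rfl | rfl⟩ := Nat.even_or_odd' j
  · rw [xiSeq_two_mul hd, xiSeq_two_mul_add_one hd, if_neg (by tauto), if_neg (by tauto)]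
  · rw [show 2 * i + 1 + 1 = 2 * (i + 1) by ring, xiSeq_two_mul hd, xiSeq_two_mul_add_one hd]
    split_ifs <;> norm_num

lemma waldB_antitone (hd : Odd d) (hf : Antitone f) (hg : Antitone g) :
    Antitone (waldB f g d) := by
  refine antitone_nat_of_succ_le fun j => ?_
  have hw := waldB_cast (f := f) (g := g) (d := d) j
  have hw' := waldB_cast (f := f) (g := g) (d := d) (j + 1)
  have := hf (by omega : j ≤ j + 1)
  have := hg (by omega : j ≤ j + 1)
  by_cases hdrop : f (j + 1) + g (j + 1) < f j + g j
  · rcases xiSeq_cases (f := f) (g := g) (d := d) j with h | ⟨h, h1, h2⟩ <;>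
    rcases xiSeq_cases (f := f) (g := g) (d := d) (j + 1) with h' | ⟨h', h1', h2'⟩ <;> omega
  · have := xiSeq_succ_le_of_not_lt (g := g) hd hdrop
    omega

/-- Without a drop of `λ₁+λ₂` between `2i` and `2i+1` both parts are unchanged and `ξ` vanishes
on the pair. -/
lemma xiSeq_two_mul_add_xiSeq (hd : Odd d) (hf : Antitone f) (hg : Antitone g) (i : ℕ) :
    xiSeq f g 1 1 d (2 * i) + xiSeq f g 1 1 d (2 * i + 1)
      = oddPair f g (2 * i + 1) - oddPair f g (2 * i) := by
  have := hf (by omega : 2 * i ≤ 2 * i + 1)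
  have := hg (by omega : 2 * i ≤ 2 * i + 1)
  rw [xiSeq_two_mul hd, xiSeq_two_mul_add_one hd]
  unfold oddPair
  split_ifs <;> omega

lemma sum_xiSeq (hd : Odd d) (hf : Antitone f) (hg : Antitone g) (pf : IsBPaired f)
    (pg : IsBPaired g) {M : ℕ} (hM : f (2 * M) = 0) :
    ∑ j ∈ range (2 * M), xiSeq f g 1 1 d j = -1 := by
  rw [sum_range_two_mul, sum_congr rfl fun i _ => xiSeq_two_mul_add_xiSeq hd hf hg i,
    sum_sub_of_pairs _ (oddPair_two_mul_add_two pf pg), oddPair_of_eq_zero hM, oddPair_zero pf pg]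
  norm_num

/-- As `ξ ≤ 0` at even and `ξ ≥ 0` at odd positions, the weights `4i+1, 4i+3` on a pair
`(2i, 2i+1)` give `4i+2` times the pair sum plus `|ξ|`. -/
lemma sum_mul_xiSeq (hd : Odd d) (hf : Antitone f) (hg : Antitone g) (pf : IsBPaired f)
    (pg : IsBPaired g) {M : ℕ} (hM : f (2 * M) = 0) :
    ∑ j ∈ range (2 * M), (2 * j + 1 : ℤ) * xiSeq f g 1 1 d j
      = ∑ j ∈ range (2 * M), |xiSeq f g 1 1 d j| - 2 * ∑ j ∈ range (2 * M), oddPair f g j := by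
  have hpair : ∀ i : ℕ,
      (2 * ((2 * i : ℕ) : ℤ) + 1) * xiSeq f g 1 1 d (2 * i)
        + (2 * ((2 * i + 1 : ℕ) : ℤ) + 1) * xiSeq f g 1 1 d (2 * i + 1)
      = (|xiSeq f g 1 1 d (2 * i)| + |xiSeq f g 1 1 d (2 * i + 1)|)
        + (4 * i + 2) * (oddPair f g (2 * i + 1) - oddPair f g (2 * i)) := by
    intro i
    have h0 : xiSeq f g 1 1 d (2 * i) ≤ 0 := by
      rw [xiSeq_two_mul hd]; split_ifs <;> norm_num
    have h1 : 0 ≤ xiSeq f g 1 1 d (2 * i + 1) := by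
      rw [xiSeq_two_mul_add_one hd]; split_ifs <;> norm_num
    rw [← xiSeq_two_mul_add_xiSeq hd hf hg i, abs_of_nonpos h0, abs_of_nonneg h1]
    push_cast
    ring
  rw [sum_range_two_mul, sum_congr rfl fun i _ => hpair i, sum_add_distrib,
    sum_mul_sub_of_pairs _ (oddPair_two_mul_add_two pf pg), oddPair_of_eq_zero hM,
    sum_range_two_mul (fun j => |xiSeq f g 1 1 d j|)]
  ring

lemma partner_spec_of_odd (hd : Odd d) (hf : Antitone f) (hg : Antitone g) {j : ℕ}
    (hfj : f j % 2 = 1) (hgj : g j % 2 = 1) (hξ : xiSeq f g 1 1 d j = 0) :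
    partner f j ≠ j ∧ f (partner f j) = f j ∧ g (partner f j) = g j ∧
      xiSeq f g 1 1 d (partner f j) = 0 := by
  obtain ⟨i, rfl | rfl⟩ := Nat.even_or_odd' j
  · have := hf (by omega : 2 * i ≤ 2 * i + 1)
    have := hg (by omega : 2 * i ≤ 2 * i + 1)
    rw [xiSeq_two_mul hd, ite_eq_right_iff] at hξ
    have hp : partner f (2 * i) = 2 * i + 1 := if_pos (by omega)
    rw [hp, xiSeq_two_mul_add_one hd]
    refine ⟨by omega, by omega, by omega, if_neg fun h => ?_⟩
    exact absurd (hξ ⟨hfj, hgj, h.2.2⟩) (by norm_num)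
  · have := hf (by omega : 2 * i ≤ 2 * i + 1)
    have := hg (by omega : 2 * i ≤ 2 * i + 1)
    rw [xiSeq_two_mul_add_one hd, ite_eq_right_iff] at hξ
    have hp : partner f (2 * i + 1) = 2 * i := if_neg (by omega)
    rw [hp, xiSeq_two_mul hd]
    refine ⟨by omega, by omega, by omega, if_neg fun h => ?_⟩
    exact absurd (hξ ⟨hfj, hgj, h.2.2⟩) (by norm_num)

lemma partner_spec_of_even (pf : IsBPaired f) (pg : IsBPaired g) {j : ℕ}
    (hfj : f j % 2 = 0) (hgj : g j % 2 = 0) :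
    partner f j ≠ j ∧ f (partner f j) = f j ∧ g (partner f j) = g j ∧
      xiSeq f g 1 1 d (partner f j) = 0 := by
  obtain ⟨i, rfl | rfl⟩ := Nat.even_or_odd' j
  · obtain _ | i := i
    · simp only [mul_zero] at hfj
      have := pf.zero_odd
      omega
    rw [show 2 * (i + 1) = 2 * i + 2 by ring] at hfj hgj ⊢
    have hf' := pf.eq_of_even i (by have := pf.parity_eq i; omega)
    have hg' := pg.eq_of_even i (by have := pg.parity_eq i; omega)
    have hp : partner f (2 * i + 2) = 2 * i + 1 := if_neg (by omega)
    rw [hp]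
    exact ⟨by omega, hf'.symm, hg'.symm, xiSeq_of_mod_two_eq_zero (by omega)⟩
  · have hf' := pf.eq_of_even i hfj
    have hg' := pg.eq_of_even i hgj
    have hp : partner f (2 * i + 1) = 2 * i + 2 := if_pos (by omega)
    rw [hp]
    exact ⟨by omega, hf', hg', xiSeq_of_mod_two_eq_zero (by omega)⟩

lemma isOrthogonal_waldB (hd : Odd d) (hf : Antitone f) (hg : Antitone g) (pf : IsBPaired f)
    (pg : IsBPaired g) {N : ℕ} (hfN : ∀ j, N ≤ j → f j = 0) (hgN : ∀ j, N ≤ j → g j = 0) :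
    IsOrthogonal (waldB f g d) := by
  rintro k hk ⟨m, rfl⟩
  refine even_pmult_of_involution (waldB_eq_zero hfN hgN) hk (partner f) fun j hj => ?_
  have hw := waldB_cast (f := f) (g := g) (d := d) j
  have hξ : xiSeq f g 1 1 d j = 0 := by
    rcases xiSeq_cases (f := f) (g := g) (d := d) j with hξ | ⟨hξ | hξ, hfj, hgj⟩ <;> omega
  obtain ⟨hne, hfp, hgp, hξp⟩ : partner f j ≠ j ∧ f (partner f j) = f j ∧
      g (partner f j) = g j ∧ xiSeq f g 1 1 d (partner f j) = 0 := by
    rcases Nat.mod_two_eq_zero_or_one (f j) with hfj | hfj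
    · exact partner_spec_of_even pf pg hfj (by omega)
    · exact partner_spec_of_odd hd hf hg hfj (by omega) hξ
  have hw' := waldB_cast (f := f) (g := g) (d := d) (partner f j)
  exact ⟨by omega, hne, partner_partner hne hfp⟩

lemma isPartitionOf_waldB {d₁ d₂ : ℕ} (hd : Odd d) (hf : IsPartitionOf f d₁)
    (hg : IsPartitionOf g d₂) (pf : IsBPaired f) (pg : IsBPaired g) :
    IsPartitionOf (waldB f g d) (d₁ + d₂ - 1) := by
  obtain ⟨hfa, N₁, hN₁, hs₁⟩ := hf
  obtain ⟨hga, N₂, hN₂, hs₂⟩ := hg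
  set M := N₁ + N₂
  have hfN : ∀ j, 2 * M ≤ j → f j = 0 := fun j hj => hN₁ j (by omega)
  have hgN : ∀ j, 2 * M ≤ j → g j = 0 := fun j hj => hN₂ j (by omega)
  refine ⟨waldB_antitone hd hfa hga, 2 * M, waldB_eq_zero hfN hgN, ?_⟩
  rw [← sum_range_eq_of_vanish hN₁ (by omega : N₁ ≤ 2 * M)] at hs₁
  rw [← sum_range_eq_of_vanish hN₂ (by omega : N₂ ≤ 2 * M)] at hs₂
  have hsum : ((∑ j ∈ range (2 * M), waldB f g d j : ℕ) : ℤ) = d₁ + d₂ - 1 := by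
    simp only [Nat.cast_sum, waldB_cast, sum_add_distrib,
      sum_xiSeq hd hfa hga pf pg (hfN _ le_rfl), ← hs₁, ← hs₂]
    ring
  omega

lemma sumSqTrans_sub_oddCount_waldB (hd : Odd d) (hf : Antitone f) (hg : Antitone g)
    (pf : IsBPaired f) (pg : IsBPaired g) {N : ℕ} (hfN : ∀ j, N ≤ j → f j = 0)
    (hgN : ∀ j, N ≤ j → g j = 0) :
    (sumSqTrans (waldB f g d) : ℤ) - oddCount (waldB f g d)
      = ((sumSqTrans f : ℤ) - oddCount f) + ((sumSqTrans g : ℤ) - oddCount g) := by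
  have hfN' : ∀ j, 2 * N ≤ j → f j = 0 := fun j hj => hfN j (by omega)
  have hgN' : ∀ j, 2 * N ≤ j → g j = 0 := fun j hj => hgN j (by omega)
  have hwN' := waldB_eq_zero (d := d) hfN' hgN'
  rw [sumSqTrans_eq (waldB_antitone hd hf hg) hwN', sumSqTrans_eq hf hfN', sumSqTrans_eq hg hgN',
    oddCount_eq hwN', oddCount_eq hfN', oddCount_eq hgN']
  push_cast
  simp only [waldB_cast, oddIndicator_waldB, mul_add, sum_add_distrib, sum_sub_distrib,
    ← mul_sum]
  linarith [sum_mul_xiSeq hd hf hg pf pg (hfN' _ le_rfl)]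

end Waldspurger

/-- type B dimension.  `d₁ = 2n₁+1`, `d₂ = 2n₂+1`, `d = d₁+d₂−1`,
`λ₁, λ₂` special orthogonal.  Then `W = W(λ₁,λ₂)` is an orthogonal partition of `d` and
`D_o(W) = D_o(λ₁) + D_o(λ₂) + d(d−1)/2 − d₁(d₁−1)/2 − d₂(d₂−1)/2`. -/
theorem stmt3 (n1 n2 : ℕ) (lam1 lam2 : ℕ → ℕ)
    (h1 : IsPartitionOf lam1 (2*n1+1)) (h1o : IsOrthogonal lam1)
    (h1s : IsOrthogonal (ptrans lam1))
    (h2 : IsPartitionOf lam2 (2*n2+1)) (h2o : IsOrthogonal lam2)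
    (h2s : IsOrthogonal (ptrans lam2)) :
    ∃ w : ℕ → ℕ, (∀ j, (w j : ℤ) = wald lam1 lam2 1 1 (2*n1+2*n2+1) j) ∧
      IsPartitionOf w (2*n1+2*n2+1) ∧ IsOrthogonal w ∧
      Dorth w (2*n1+2*n2+1)
        = Dorth lam1 (2*n1+1) + Dorth lam2 (2*n2+1)
          + (((2*n1+2*n2+1 : ℕ) : ℚ) * (((2*n1+2*n2+1 : ℕ) : ℚ) - 1) / 2
             - ((2*n1+1 : ℕ) : ℚ) * (((2*n1+1 : ℕ) : ℚ) - 1) / 2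
             - ((2*n2+1 : ℕ) : ℚ) * (((2*n2+1 : ℕ) : ℚ) - 1) / 2) := by
  have hd : Odd (2*n1+2*n2+1) := ⟨n1 + n2, by ring⟩
  have p1 := IsBPaired.of_isOrthogonal h1 h1o h1s
  have p2 := IsBPaired.of_isOrthogonal h2 h2o h2s
  have hpart := isPartitionOf_waldB hd h1 h2 p1 p2
  obtain ⟨hA1, N1, hN1, -⟩ := h1
  obtain ⟨hA2, N2, hN2, -⟩ := h2
  have hN1' : ∀ j, N1 + N2 ≤ j → lam1 j = 0 := fun j hj => hN1 j (by omega)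
  have hN2' : ∀ j, N1 + N2 ≤ j → lam2 j = 0 := fun j hj => hN2 j (by omega)
  refine ⟨waldB lam1 lam2 (2*n1+2*n2+1), fun j => waldB_cast j, ?_,
    isOrthogonal_waldB hd hA1 hA2 p1 p2 hN1' hN2', ?_⟩
  · rwa [show 2*n1+1 + (2*n2+1) - 1 = 2*n1+2*n2+1 by omega] at hpart
  · have key : ((sumSqTrans (waldB lam1 lam2 (2*n1+2*n2+1)) : ℚ)
        - oddCount (waldB lam1 lam2 (2*n1+2*n2+1)))
        = ((sumSqTrans lam1 : ℚ) - oddCount lam1) + ((sumSqTrans lam2 : ℚ) - oddCount lam2) := by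
      exact_mod_cast sumSqTrans_sub_oddCount_waldB hd hA1 hA2 p1 p2 hN1' hN2'
    simp only [Dorth]
    linarith
end
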